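/- arXiv:2002.04506 — 3 statements merged into one kernel-verified Lean document; each statement's English description precedes it below -/
import Mathlib

section
/- Let D₀ be an operator containing only e₁₁ and e₁₂ middle-tensor factors, D = D₀ + J D₀ J⁻¹, and A an operator of the form A = A₁₁ + A₂₂ (middle factors only e₁₁ and e₂₂) satisfying AJ = αJA for some α ∈ {±1}. Then [A, D] = 0 if and only if [A, D₀] = 0; the same equivalence holds for anticommutators. -/
noncomputable section
open Matrix
open scoped ComplexConjugate

abbrev M2 : Type := Matrix (Fin 2) (Fin 2) ℂ
abbrev M3 : Type := Matrix (Fin 3) (Fin 3) ℂ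
abbrev M4 : Type := Matrix (Fin 4) (Fin 4) ℂ
abbrev Idx : Type := Fin 4 × Fin 2 × Fin 4
abbrev M32 : Type := Matrix Idx Idx ℂ

/-- matrix unit `e_{ij}` -/
def eu {n : ℕ} (i j : Fin n) : Matrix (Fin n) (Fin n) ℂ := Matrix.single i j 1

/-- the element `A ⊗ E ⊗ B` of `M₄(ℂ) ⊗ M₂(ℂ) ⊗ M₄(ℂ)` realized as a matrix on `ℂ⁴ ⊗ ℂ² ⊗ ℂ⁴` -/
def tp (A : M4) (E : M2) (B : M4) : M32 :=
  Matrix.of fun p q => A p.1 q.1 * E p.2.1 q.2.1 * B p.2.2 q.2.2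

/-- a 4×4 matrix assembled from four 2×2 blocks -/
def bm (a b c d : M2) : M4 :=
  Matrix.reindex finSumFinEquiv finSumFinEquiv (Matrix.fromBlocks a b c d)

/-- block-diagonal `diag(a, b)` with 2×2 blocks -/
def diag22 (a b : M2) : M4 := bm a 0 0 b

/-- block-diagonal `diag(l, n)` with a scalar and a 3×3 block -/
def diag13 (l : ℂ) (n : M3) : M4 :=
  Matrix.reindex finSumFinEquiv finSumFinEquiv
    (Matrix.fromBlocks (Matrix.diagonal fun _ : Fin 1 => l) 0 0 n)

/-- the standard embedding of the quaternions into `M₂(ℂ)` -/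
def IsQuat (q : M2) : Prop := ∃ x y : ℂ, q = !![x, y; -(conj y), conj x]

/-- the Hilbert space `ℂ⁴ ⊗ ℂ² ⊗ ℂ⁴ ≅ M₄(ℂ) ⊕ M₄(ℂ)` -/
abbrev HSp : Type := Idx → ℂ

/-- index swap underlying the real structure `J` -/
def sw (p : Idx) : Idx := (p.2.2, if p.2.1 = 0 then 1 else 0, p.1)

/-- the antilinear real structure `J[v;w] = [w*;v*]` -/
noncomputable def Jr (ψ : HSp) : HSp := fun p => conj (ψ (sw p))

/-- action of an operator on the Hilbert space -/
def act (X : M32) (ψ : HSp) : HSp := X.mulVec ψ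

/-- conjugation `X ↦ J X J⁻¹` by the real structure, at the matrix level -/
noncomputable def Jconj (X : M32) : M32 := Matrix.of fun p q => conj (X (sw p) (sw q))

/-- the opposite-algebra element `J X* J⁻¹` -/
noncomputable def opp (X : M32) : M32 := Jconj Xᴴ

/-- representation of the (unreduced) Pati–Salam algebra `ℍ_R ⊕ ℍ_L ⊕ M₄(ℂ)` -/
def piPS (q₁ q₂ : M2) (m : M4) : M32 :=
  tp (diag22 q₁ q₂) (eu 0 0) 1 + tp m (eu 1 1) 1

/-- representation of the reduced Pati–Salam algebra `ℍ_R ⊕ ℍ_L ⊕ ℂ ⊕ M₃(ℂ)` -/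
def piRed (q₁ q₂ : M2) (l : ℂ) (n : M3) : M32 := piPS q₁ q₂ (diag13 l n)

/-- the grading γ -/
def gam : M32 := tp (diag22 1 (-1)) (eu 0 0) 1 + tp 1 (eu 1 1) (diag22 (-1) 1)

/-- the grading γ⋆ -/
def gamStar : M32 :=
  tp (diag22 1 (-1)) (eu 0 0) (diag13 1 (-1)) + tp (diag13 (-1) 1) (eu 1 1) (diag22 1 (-1))

/-- the nontrivial β for the unreduced model -/
def betaPS : M32 := tp (diag22 1 (-1)) (eu 0 0) 1 + tp 1 (eu 1 1) (diag22 1 (-1))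

/-! `A = α JAJ⁻¹` turns the `J D₀ J⁻¹` part of `A D + s D A` into `α J (A D₀ + s D₀ A) J⁻¹`
(for real `s`). Since `J` exchanges the two middle indices, this part lives in the other middle
rows than `A D₀ + s D₀ A`, so the sum vanishes exactly when `A D₀ + s D₀ A` does. -/

/-- `X` has only `e_{c1}`, `e_{c2}` middle components (indices start at `0`). -/
def RowSupp (c : Fin 2) (X : M32) : Prop := ∀ p q : Idx, X p q ≠ 0 → p.2.1 = c

/-- `X = X₁₁ + X₂₂` in middle components. -/
def BlockDiag (X : M32) : Prop := ∀ p q : Idx, X p q ≠ 0 → p.2.1 = q.2.1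

/-- The commutator for `s = -1`, the anticommutator for `s = 1`. -/
def sComm (s : ℂ) (A D : M32) : M32 := A * D + s • (D * A)

lemma sw_involutive : Function.Involutive sw := by
  rintro ⟨a, b, c⟩
  fin_cases b <;> rfl

lemma sw_snd_fst (p : Idx) : (sw p).2.1 = p.2.1 + 1 := by
  obtain ⟨a, b, c⟩ := p
  fin_cases b <;> rfl

lemma Jconj_eq_map_submatrix (X : M32) :
    Jconj X = (X.submatrix (sw_involutive.toPerm sw) (sw_involutive.toPerm sw)).map
      (starRingEnd ℂ) :=
  rfl

lemma Jconj_zero : Jconj 0 = 0 := by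
  ext p q
  simp [Jconj]

lemma Jconj_add (X Y : M32) : Jconj (X + Y) = Jconj X + Jconj Y := by
  ext p q
  simp [Jconj]

lemma Jconj_smul (c : ℂ) (X : M32) : Jconj (c • X) = conj c • Jconj X := by
  ext p q
  simp [Jconj]

lemma Jconj_mul (X Y : M32) : Jconj (X * Y) = Jconj X * Jconj Y := by
  rw [Jconj_eq_map_submatrix, Jconj_eq_map_submatrix, Jconj_eq_map_submatrix,
    ← Matrix.map_mul, submatrix_mul_equiv]

lemma Jr_single (q : Idx) : Jr (Pi.single (sw q) 1) = Pi.single q 1 := by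
  funext p
  simp [Jr, Pi.single_apply, sw_involutive.injective.eq_iff]

lemma eq_smul_Jconj_of_act_Jr {A : M32} {α : ℂ}
    (hAJ : ∀ ψ : HSp, act A (Jr ψ) = α • Jr (act A ψ)) : A = α • Jconj A := by
  ext p q
  have h := congrFun (hAJ (Pi.single (sw q) 1)) p
  simpa [act, Jr_single, mulVec_single_one, Jr, Jconj] using h

lemma rowSupp_iff {c : Fin 2} {X : M32} :
    RowSupp c X ↔ ∀ p q : Idx, p.2.1 ≠ c → X p q = 0 :=
  forall₂_congr fun _ _ => not_imp_comm

namespace RowSupp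

variable {c : Fin 2} {X Y : M32}

lemma add (hX : RowSupp c X) (hY : RowSupp c Y) : RowSupp c (X + Y) := by
  rw [rowSupp_iff] at *
  intro p q hp
  simp [hX p q hp, hY p q hp]

lemma smul (hX : RowSupp c X) (s : ℂ) : RowSupp c (s • X) := by
  rw [rowSupp_iff] at *
  intro p q hp
  simp [hX p q hp]

lemma of_mul (h : ∀ p r q : Idx, X p r ≠ 0 → Y r q ≠ 0 → p.2.1 = c) : RowSupp c (X * Y) := by
  rw [rowSupp_iff]
  intro p q hp
  rw [mul_apply]
  refine Finset.sum_eq_zero fun r _ => ?_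
  by_contra hpr
  exact hp (h p r q (left_ne_zero_of_mul hpr) (right_ne_zero_of_mul hpr))

lemma mul_right (hX : RowSupp c X) (Y : M32) : RowSupp c (X * Y) :=
  of_mul fun p r _ hpr _ => hX p r hpr

lemma blockDiag_mul {A : M32} (hA : BlockDiag A) (hX : RowSupp c X) : RowSupp c (A * X) :=
  of_mul fun p r q hpr hrq => (hA p r hpr).trans (hX r q hrq)

lemma sComm {A : M32} (hA : BlockDiag A) (hX : RowSupp c X) (s : ℂ) :
    RowSupp c (sComm s A X) :=
  (hX.blockDiag_mul hA).add ((hX.mul_right A).smul s)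

/-- In `Fin 2`, `c + 1` is the other middle index. -/
lemma Jconj (hX : RowSupp c X) : RowSupp (c + 1) (Jconj X) := by
  intro p q hpq
  have h := hX (sw p) (sw q) fun h0 => hpq (by simp [_root_.Jconj, h0])
  rw [sw_snd_fst] at h
  rw [← h, add_assoc, show (1 + 1 : Fin 2) = 0 from rfl, add_zero]

lemma eq_zero_of_add_eq_zero (hX : RowSupp c X) (hY : RowSupp (c + 1) Y) (h : X + Y = 0) :
    X = 0 := by
  rw [rowSupp_iff] at hX hY
  ext p q
  by_cases hp : p.2.1 = c
  · have hc : p.2.1 ≠ c + 1 := by simp [hp]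
    simpa [hY p q hc] using congrFun (congrFun h p) q
  · exact hX p q hp

end RowSupp

lemma add_smul_Jconj_eq_zero_iff {c : Fin 2} {X : M32} (hX : RowSupp c X) (α : ℂ) :
    X + α • Jconj X = 0 ↔ X = 0 := by
  refine ⟨hX.eq_zero_of_add_eq_zero (hX.Jconj.smul α), ?_⟩
  rintro rfl
  rw [Jconj_zero, smul_zero, add_zero]

lemma sComm_add_right (s : ℂ) (A D D' : M32) :
    sComm s A (D + D') = sComm s A D + sComm s A D' := by
  simp only [sComm, mul_add, add_mul, smul_add]
  abel

lemma smul_sComm (s α : ℂ) (A D : M32) : α • sComm s A D = sComm s (α • A) D := by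
  rw [sComm, sComm, smul_add, Matrix.smul_mul, Matrix.mul_smul, smul_comm α s]

lemma Jconj_sComm {s : ℂ} (hs : conj s = s) (A D : M32) :
    Jconj (sComm s A D) = sComm s (Jconj A) (Jconj D) := by
  rw [sComm, sComm, Jconj_add, Jconj_smul, Jconj_mul, Jconj_mul, hs]

lemma sComm_add_Jconj_eq_zero_iff {s α : ℂ} {c : Fin 2} {A D₀ : M32} (hs : conj s = s)
    (hD₀ : RowSupp c D₀) (hA : BlockDiag A) (hJA : A = α • Jconj A) :
    sComm s A (D₀ + Jconj D₀) = 0 ↔ sComm s A D₀ = 0 := by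
  have hsplit : sComm s A (D₀ + Jconj D₀) = sComm s A D₀ + α • Jconj (sComm s A D₀) := by
    rw [sComm_add_right, Jconj_sComm hs, smul_sComm, ← hJA]
  rw [hsplit]
  exact add_smul_Jconj_eq_zero_iff (hD₀.sComm hA s) α

theorem commute_D_iff_commute_D0_general (D0 A : M32) (α : ℂ)
    (hD0 : ∀ p q : Idx, D0 p q ≠ 0 → p.2.1 = 0)
    (hA : ∀ p q : Idx, A p q ≠ 0 → p.2.1 = q.2.1)
    (hAJ : ∀ ψ : HSp, act A (Jr ψ) = α • Jr (act A ψ)) :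
    (A * (D0 + Jconj D0) = (D0 + Jconj D0) * A ↔ A * D0 = D0 * A) ∧
    (A * (D0 + Jconj D0) + (D0 + Jconj D0) * A = 0 ↔ A * D0 + D0 * A = 0) := by
  have hJA := eq_smul_Jconj_of_act_Jr hAJ
  constructor
  · have h := sComm_add_Jconj_eq_zero_iff (s := -1) (by simp) hD0 hA hJA
    simpa only [sComm, neg_one_smul, ← sub_eq_add_neg, sub_eq_zero] using h
  · have h := sComm_add_Jconj_eq_zero_iff (s := 1) (by simp) hD0 hA hJA
    simpa only [sComm, one_smul] using h

/-- For `D = D₀ + J D₀ J⁻¹` with `D₀` having only `e₁₁, e₁₂` middle components and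
`A = A₁₁ + A₂₂` with `AJ = αJA`, `α = ±1`: `[A,D] = 0 ↔ [A,D₀] = 0`, and likewise
for anticommutators. -/
theorem commute_D_iff_commute_D0 (D0 A : M32) (α : ℂ)
    (hα : α = 1 ∨ α = -1)
    (hD0 : ∀ p q : Idx, D0 p q ≠ 0 → p.2.1 = 0)
    (hA : ∀ p q : Idx, A p q ≠ 0 → p.2.1 = q.2.1)
    (hAJ : ∀ ψ : HSp, act A (Jr ψ) = α • Jr (act A ψ)) :
    (A * (D0 + Jconj D0) = (D0 + Jconj D0) * A ↔ A * D0 = D0 * A) ∧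
    (A * (D0 + Jconj D0) + (D0 + Jconj D0) * A = 0 ↔ A * D0 + D0 * A = 0) :=
  commute_D_iff_commute_D0_general D0 A α hD0 hA hAJ
end
end

section
/- An operator D = D₀ + J D₀ J⁻¹ (with D₀ having only e₁₁ and e₁₂ middle components) anticommutes with the grading γ = diag(1₂, -1₂) ⊗ e₁₁ ⊗ 1₄ + 1₄ ⊗ e₂₂ ⊗ diag(-1₂, 1₂) if and only if D₀ = Σ_k { [[0, X_k],[Y_k, 0]] ⊗ e₁₁ ⊗ A_k + [[P_k, Q_k],[0, 0]] ⊗ e₁₂ ⊗ [[Z_k, 0],[T_k, 0]] + [[0,0],[U_k, V_k]] ⊗ e₁₂ ⊗ [[0, W_k],[0, S_k]] }, where all blocks are 2×2 complex matrices and A_k ∈ M_4(ℂ). -/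
noncomputable section
open Matrix
open scoped ComplexConjugate

/-!
In the standard basis of `ℂ⁴ ⊗ ℂ² ⊗ ℂ⁴` the grading `γ` is diagonal with eigenvalues `±1`, so an
operator anticommutes with `γ` exactly when its matrix entries between basis vectors of equal
chirality vanish. `D₀` lives in the rows with middle index `0`, and `J` swaps the middle index
while flipping the chirality, so for `D = D₀ + J D₀ J⁻¹` this is the same condition on `D₀` alone.
Finally, the sums in the block form are exactly the matrices supported on the rows with middle
index `0` and on pairs of opposite chirality: each summand is supported there, and every matrix
unit at such a position is a single summand of one of the three shapes.
-/

theorem Matrix.mul_diagonal_add_diagonal_mul_eq_zero_iff {n R : Type*} [Fintype n]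
    [DecidableEq n] [CommSemiring R] (M : Matrix n n R) (d : n → R) :
    M * diagonal d + diagonal d * M = 0 ↔ ∀ i j, (d i + d j) * M i j = 0 := by
  simp only [← Matrix.ext_iff, Matrix.add_apply, mul_diagonal, diagonal_mul, zero_apply]
  exact forall₂_congr fun i j => by rw [add_mul, mul_comm (d j), add_comm]

local notation "halves" => (finSumFinEquiv : Fin 2 ⊕ Fin 2 ≃ Fin 4)

def inTopHalf (i : Fin 4) : Bool := (Equiv.symm halves i).isLeft

@[simp]
lemma inTopHalf_finSumFinEquiv (s : Fin 2 ⊕ Fin 2) : inTopHalf (finSumFinEquiv s) = s.isLeft := by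
  simp [inTopHalf]

@[simp]
lemma bm_apply_finSumFinEquiv (a b c d : M2) (s t : Fin 2 ⊕ Fin 2) :
    bm a b c d (finSumFinEquiv s) (finSumFinEquiv t) = fromBlocks a b c d s t := by
  simp [bm]

lemma bm_zero : bm 0 0 0 0 = 0 := by
  simp [bm]

lemma diag22_diagonal (d₁ d₂ : Fin 2 → ℂ) :
    diag22 (diagonal d₁) (diagonal d₂) = diagonal (Sum.elim d₁ d₂ ∘ Equiv.symm halves) := by
  rw [diag22, bm, fromBlocks_diagonal, reindex_apply, submatrix_diagonal_equiv]

def quadrants (M : M4) : Matrix (Fin 2 ⊕ Fin 2) (Fin 2 ⊕ Fin 2) ℂ :=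
  reindex (Equiv.symm halves) (Equiv.symm halves) M

lemma bm_quadrants (M : M4) :
    bm (quadrants M).toBlocks₁₁ (quadrants M).toBlocks₁₂ (quadrants M).toBlocks₂₁
      (quadrants M).toBlocks₂₂ = M := by
  rw [bm, fromBlocks_toBlocks, quadrants]
  simp

section quadrants

variable {M : M4}

lemma toBlocks₁₁_quadrants_eq_zero (h : ∀ i j, inTopHalf i → inTopHalf j → M i j = 0) :
    (quadrants M).toBlocks₁₁ = 0 := by
  ext; simp [quadrants, toBlocks₁₁, h]

lemma toBlocks₁₂_quadrants_eq_zero (h : ∀ i j, inTopHalf i → !inTopHalf j → M i j = 0) :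
    (quadrants M).toBlocks₁₂ = 0 := by
  ext; simp [quadrants, toBlocks₁₂, h]

lemma toBlocks₂₁_quadrants_eq_zero (h : ∀ i j, !inTopHalf i → inTopHalf j → M i j = 0) :
    (quadrants M).toBlocks₂₁ = 0 := by
  ext; simp [quadrants, toBlocks₂₁, h]

lemma toBlocks₂₂_quadrants_eq_zero (h : ∀ i j, !inTopHalf i → !inTopHalf j → M i j = 0) :
    (quadrants M).toBlocks₂₂ = 0 := by
  ext; simp [quadrants, toBlocks₂₂, h]

end quadrants

@[simp]
lemma tp_apply (A : M4) (E : M2) (B : M4) (p q : Idx) :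
    tp A E B p q = A p.1 q.1 * E p.2.1 q.2.1 * B p.2.2 q.2.2 := rfl

lemma tp_zero_left (E : M2) (B : M4) : tp 0 E B = 0 := by
  ext; simp

lemma tp_diagonal (d₁ : Fin 4 → ℂ) (d₂ : Fin 2 → ℂ) (d₃ : Fin 4 → ℂ) :
    tp (diagonal d₁) (diagonal d₂) (diagonal d₃) =
      diagonal fun p => d₁ p.1 * d₂ p.2.1 * d₃ p.2.2 := by
  ext ⟨i, m, a⟩ ⟨j, m', b⟩
  by_cases hi : i = j <;> by_cases hm : m = m' <;> by_cases ha : a = b <;> simp [hi, hm, ha]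

lemma single_eq_tp (p q : Idx) (c : ℂ) :
    single p q c = tp (single p.1 q.1 1) (eu p.2.1 q.2.1) (single p.2.2 q.2.2 c) := by
  ext r r'
  simp only [tp_apply, eu, single_apply, Prod.ext_iff]
  split_ifs <;> simp_all

def gamPos (p : Idx) : Bool := if p.2.1 = 0 then inTopHalf p.1 else !inTopHalf p.2.2

lemma gamPos_sw (p : Idx) : gamPos (sw p) = !gamPos p := by
  obtain ⟨i, m, a⟩ := p
  fin_cases m <;> simp [gamPos, sw]

lemma gam_eq_diagonal : gam = diagonal fun p => if gamPos p then 1 else -1 := by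
  have h₁ : (1 : M2) = diagonal 1 := diagonal_one.symm
  have h₂ : (-1 : M2) = diagonal (-1) := by rw [← diagonal_one, diagonal_neg]; rfl
  rw [gam, h₂, h₁, diag22_diagonal, diag22_diagonal, eu, eu, ← diagonal_single,
    ← diagonal_single, ← diagonal_one, tp_diagonal, tp_diagonal, diagonal_add]
  congr 1
  ext ⟨i, m, a⟩
  obtain ⟨s, rfl⟩ := Equiv.surjective halves i
  obtain ⟨u, rfl⟩ := Equiv.surjective halves a
  fin_cases m <;> rcases s with s | s <;> rcases u with u | u <;> simp [gamPos]

lemma mul_gam_add_gam_mul_eq_zero_iff (D : M32) :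
    D * gam + gam * D = 0 ↔ ∀ p q, gamPos p = gamPos q → D p q = 0 := by
  rw [gam_eq_diagonal, mul_diagonal_add_diagonal_mul_eq_zero_iff]
  refine forall₂_congr fun p q => ?_
  cases gamPos p <;> cases gamPos q <;> norm_num

lemma Jconj_apply_eq_zero {D : M32} (hD : ∀ p q, D p q ≠ 0 → p.2.1 = 0) {p : Idx}
    (hp : p.2.1 = 0) (q : Idx) : Jconj D p q = 0 := by
  have hsw : (sw p).2.1 ≠ 0 := by simp [sw, hp]
  simp only [Jconj, of_apply, map_eq_zero]
  exact not_not.1 (mt (hD _ _) hsw)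

def blockTerm (X Y P Q Z T U V W S : M2) (A : M4) : M32 :=
  tp (bm 0 X Y 0) (eu 0 0) A + tp (bm P Q 0 0) (eu 0 1) (bm Z 0 T 0) +
    tp (bm 0 0 U V) (eu 0 1) (bm 0 W 0 S)

def blockForm : AddSubmonoid M32 where
  carrier := {D | ∃ (n : ℕ) (X Y P Q Z T U V W S : Fin n → M2) (A : Fin n → M4),
    D = ∑ k, blockTerm (X k) (Y k) (P k) (Q k) (Z k) (T k) (U k) (V k) (W k) (S k) (A k)}
  zero_mem' := ⟨0, 0, 0, 0, 0, 0, 0, 0, 0, 0, 0, 0, by simp⟩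
  add_mem' := by
    rintro _ _ ⟨n, X, Y, P, Q, Z, T, U, V, W, S, A, rfl⟩
      ⟨n', X', Y', P', Q', Z', T', U', V', W', S', A', rfl⟩
    refine ⟨n + n', Fin.append X X', Fin.append Y Y', Fin.append P P', Fin.append Q Q',
      Fin.append Z Z', Fin.append T T', Fin.append U U', Fin.append V V', Fin.append W W',
      Fin.append S S', Fin.append A A', ?_⟩
    simp [Fin.sum_univ_add]

lemma blockTerm_mem_blockForm (X Y P Q Z T U V W S : M2) (A : M4) :
    blockTerm X Y P Q Z T U V W S A ∈ blockForm :=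
  ⟨1, fun _ => X, fun _ => Y, fun _ => P, fun _ => Q, fun _ => Z, fun _ => T, fun _ => U,
    fun _ => V, fun _ => W, fun _ => S, fun _ => A, by simp⟩

lemma blockTerm_apply_eq_zero (X Y P Q Z T U V W S : M2) (A : M4) {p q : Idx}
    (h : ¬(p.2.1 = 0 ∧ gamPos p ≠ gamPos q)) : blockTerm X Y P Q Z T U V W S A p q = 0 := by
  obtain ⟨i, m, a⟩ := p
  obtain ⟨j, m', b⟩ := q
  obtain ⟨s, rfl⟩ := Equiv.surjective halves i
  obtain ⟨t, rfl⟩ := Equiv.surjective halves j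
  obtain ⟨u, rfl⟩ := Equiv.surjective halves b
  obtain ⟨v, rfl⟩ := Equiv.surjective halves a
  fin_cases m <;> fin_cases m' <;> rcases s with s | s <;> rcases t with t | t <;>
    rcases u with u | u <;> rcases v with v | v <;> simp_all [blockTerm, gamPos, eu]

lemma tp_mem_blockForm_of_offDiag {M : M4} (hM : ∀ i j, inTopHalf i = inTopHalf j → M i j = 0)
    (A : M4) : tp M (eu 0 0) A ∈ blockForm := by
  have hM' : bm 0 (quadrants M).toBlocks₁₂ (quadrants M).toBlocks₂₁ 0 = M := by
    conv_rhs => rw [← bm_quadrants M]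
    rw [toBlocks₁₁_quadrants_eq_zero, toBlocks₂₂_quadrants_eq_zero]
    all_goals intro i j hi hj; exact hM i j (by simp_all)
  simpa [blockTerm, hM', bm_zero, tp_zero_left] using blockTerm_mem_blockForm
    (quadrants M).toBlocks₁₂ (quadrants M).toBlocks₂₁ 0 0 0 0 0 0 0 0 A

lemma tp_mem_blockForm_of_top {M N : M4} (hM : ∀ i j, !inTopHalf i → M i j = 0)
    (hN : ∀ a b, !inTopHalf b → N a b = 0) : tp M (eu 0 1) N ∈ blockForm := by
  have hM' : bm (quadrants M).toBlocks₁₁ (quadrants M).toBlocks₁₂ 0 0 = M := by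
    conv_rhs => rw [← bm_quadrants M]
    rw [toBlocks₂₁_quadrants_eq_zero fun i j hi _ => hM i j hi,
      toBlocks₂₂_quadrants_eq_zero fun i j hi _ => hM i j hi]
  have hN' : bm (quadrants N).toBlocks₁₁ 0 (quadrants N).toBlocks₂₁ 0 = N := by
    conv_rhs => rw [← bm_quadrants N]
    rw [toBlocks₁₂_quadrants_eq_zero fun a b _ hb => hN a b hb,
      toBlocks₂₂_quadrants_eq_zero fun a b _ hb => hN a b hb]
  simpa [blockTerm, hM', hN', bm_zero, tp_zero_left] using blockTerm_mem_blockForm 0 0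
    (quadrants M).toBlocks₁₁ (quadrants M).toBlocks₁₂ (quadrants N).toBlocks₁₁
    (quadrants N).toBlocks₂₁ 0 0 0 0 0

lemma tp_mem_blockForm_of_bottom {M N : M4} (hM : ∀ i j, inTopHalf i → M i j = 0)
    (hN : ∀ a b, inTopHalf b → N a b = 0) : tp M (eu 0 1) N ∈ blockForm := by
  have hM' : bm 0 0 (quadrants M).toBlocks₂₁ (quadrants M).toBlocks₂₂ = M := by
    conv_rhs => rw [← bm_quadrants M]
    rw [toBlocks₁₁_quadrants_eq_zero fun i j hi _ => hM i j hi,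
      toBlocks₁₂_quadrants_eq_zero fun i j hi _ => hM i j hi]
  have hN' : bm 0 (quadrants N).toBlocks₁₂ 0 (quadrants N).toBlocks₂₂ = N := by
    conv_rhs => rw [← bm_quadrants N]
    rw [toBlocks₁₁_quadrants_eq_zero fun a b _ hb => hN a b hb,
      toBlocks₂₁_quadrants_eq_zero fun a b _ hb => hN a b hb]
  simpa [blockTerm, hM', hN', bm_zero, tp_zero_left] using blockTerm_mem_blockForm 0 0 0 0 0 0
    (quadrants M).toBlocks₂₁ (quadrants M).toBlocks₂₂ (quadrants N).toBlocks₁₂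
    (quadrants N).toBlocks₂₂ 0

lemma single_mem_blockForm {p q : Idx} (hp : p.2.1 = 0) (hpq : gamPos p ≠ gamPos q) (c : ℂ) :
    single p q c ∈ blockForm := by
  obtain ⟨i, m, a⟩ := p
  obtain ⟨j, m', b⟩ := q
  simp only at hp
  subst hp
  rw [single_eq_tp]
  fin_cases m'
  · refine tp_mem_blockForm_of_offDiag (fun k l hkl => single_apply_of_ne _ _ _ _ _ ?_) _
    rintro ⟨rfl, rfl⟩
    exact hpq (by simpa [gamPos] using hkl)
  · have hib : inTopHalf i = inTopHalf b := by simpa [gamPos] using hpq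
    cases hi : inTopHalf i
    · refine tp_mem_blockForm_of_bottom (fun k l hk => single_apply_of_row_ne ?_ _ _ _)
        (fun k l hl => single_apply_of_col_ne _ _ ?_ _) <;> rintro rfl <;> simp_all
    · refine tp_mem_blockForm_of_top (fun k l hk => single_apply_of_row_ne ?_ _ _ _)
        (fun k l hl => single_apply_of_col_ne _ _ ?_ _) <;> rintro rfl <;> simp_all

lemma mem_blockForm_iff {D : M32} :
    D ∈ blockForm ↔ ∀ p q, D p q ≠ 0 → p.2.1 = 0 ∧ gamPos p ≠ gamPos q := by
  constructor
  · rintro ⟨n, X, Y, P, Q, Z, T, U, V, W, S, A, rfl⟩ p q hpq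
    by_contra hadm
    rw [Matrix.sum_apply] at hpq
    exact hpq (Finset.sum_eq_zero fun k _ => blockTerm_apply_eq_zero _ _ _ _ _ _ _ _ _ _ _ hadm)
  · intro h
    rw [matrix_eq_sum_single D]
    refine sum_mem fun p _ => sum_mem fun q _ => ?_
    by_cases hpq : D p q = 0
    · simp [hpq, zero_mem]
    · exact single_mem_blockForm (h p q hpq).1 (h p q hpq).2 _

/-- `D = D₀ + J D₀ J⁻¹` anticommutes with the grading `γ` iff `D₀` has the stated
block form. -/
theorem anticommute_gamma_iff (D0 : M32)
    (hD0 : ∀ p q : Idx, D0 p q ≠ 0 → p.2.1 = 0) :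
    (D0 + Jconj D0) * gam + gam * (D0 + Jconj D0) = 0 ↔
    ∃ (n : ℕ) (X Y P Q Z T U V W S : Fin n → M2) (A : Fin n → M4),
      D0 = ∑ k : Fin n,
        (tp (bm 0 (X k) (Y k) 0) (eu 0 0) (A k) +
         tp (bm (P k) (Q k) 0 0) (eu 0 1) (bm (Z k) 0 (T k) 0) +
         tp (bm 0 0 (U k) (V k)) (eu 0 1) (bm 0 (W k) 0 (S k))) := by
  change _ ↔ D0 ∈ blockForm
  rw [mul_gam_add_gam_mul_eq_zero_iff, mem_blockForm_iff]
  constructor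
  · intro h p q hpq
    have hp := hD0 p q hpq
    refine ⟨hp, fun hpos => hpq ?_⟩
    simpa [Jconj_apply_eq_zero hD0 hp] using h p q hpos
  · intro h p q hpos
    have hD0_pos : ∀ p q, gamPos p = gamPos q → D0 p q = 0 :=
      fun p q hpos => by_contra fun hne => (h p q hne).2 hpos
    rw [Matrix.add_apply, hD0_pos p q hpos, Jconj, of_apply,
      hD0_pos _ _ (by simp [gamPos_sw, hpos]), map_zero, add_zero]
end
end

section
/- The grading γ* = diag(1₂,-1₂) ⊗ e₁₁ ⊗ diag(1,-1₃) + diag(-1,1₃) ⊗ e₂₂ ⊗ diag(1₂,-1₂) does not commute with the represented unreduced Pati-Salam algebra: there exists m ∈ M_4(ℂ) such that γ* does not commute with π(0, 0, m) = m ⊗ e₂₂ ⊗ 1₄. However, γ* commutes with π(q₁, q₂, λ, n) for all quaternions q₁, q₂, λ ∈ ℂ, n ∈ M_3(ℂ) in the reduced representation where m = diag(λ, n). -/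
noncomputable section
open Matrix
open scoped ComplexConjugate

/-!
Both `γ⋆` and `π(q₁, q₂, m)` are block diagonal for the splitting `e₁₁ ⊕ e₂₂` of the middle
factor, so they commute blockwise. On the `e₁₁` block `γ⋆` acts on the first factor by
`diag(1₂, -1₂)`, which commutes with `diag(q₁, q₂)` for any `q₁, q₂`; on the `e₂₂` block it acts
by `diag(-1, 1₃)`, which commutes with `m` when `m = diag(λ, n)` preserves `ℂ ⊕ ℂ³`, but not
with the matrix unit `e₁₂`, which mixes the two summands.
-/

open scoped Kronecker

lemma tp_eq_kronecker (A : M4) (E : M2) (B : M4) : tp A E B = A ⊗ₖ (E ⊗ₖ B) := by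
  ext p q
  simp [tp, mul_assoc]

lemma tp_mul (A A' : M4) (E E' : M2) (B B' : M4) :
    tp A E B * tp A' E' B' = tp (A * A') (E * E') (B * B') := by
  simp only [tp_eq_kronecker, Matrix.mul_kronecker_mul]

lemma commute_tp {A A' : M4} {E E' : M2} {B B' : M4}
    (hA : Commute A A') (hE : Commute E E') (hB : Commute B B') :
    Commute (tp A E B) (tp A' E' B') := by
  rw [Commute, SemiconjBy, tp_mul, tp_mul, hA.eq, hE.eq, hB.eq]

lemma tp_zero_middle (A B : M4) : tp A 0 B = 0 := by
  ext
  simp [tp]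

lemma commute_tp_of_mul_eq_zero {E E' : M2} (h : E * E' = 0) (h' : E' * E = 0)
    (A A' B B' : M4) : Commute (tp A E B) (tp A' E' B') := by
  rw [Commute, SemiconjBy, tp_mul, tp_mul, h, h', tp_zero_middle, tp_zero_middle]

lemma eu_mul_eu {n : ℕ} (i j k : Fin n) : eu i j * eu j k = eu i k := by
  simp [eu]

lemma eu_mul_eu_of_ne {n : ℕ} {j k : Fin n} (i l : Fin n) (h : j ≠ k) : eu i j * eu k l = 0 := by
  simp [eu, h]

lemma diag22_mul (a b c d : M2) : diag22 a b * diag22 c d = diag22 (a * c) (b * d) := by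
  simp [diag22, bm, Matrix.submatrix_mul_equiv, Matrix.fromBlocks_multiply]

lemma commute_diag22 {a b c d : M2} (hac : Commute a c) (hbd : Commute b d) :
    Commute (diag22 a b) (diag22 c d) := by
  rw [Commute, SemiconjBy, diag22_mul, diag22_mul, hac.eq, hbd.eq]

lemma diag13_mul (l l' : ℂ) (n n' : M3) :
    diag13 l n * diag13 l' n' = diag13 (l * l') (n * n') := by
  simp [diag13, Matrix.submatrix_mul_equiv, Matrix.fromBlocks_multiply]

lemma commute_diag13 (l l' : ℂ) {n n' : M3} (hn : Commute n n') :
    Commute (diag13 l n) (diag13 l' n') := by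
  rw [Commute, SemiconjBy, diag13_mul, diag13_mul, mul_comm l, hn.eq]

lemma diag13_apply_zero_zero (l : ℂ) (n : M3) : diag13 l n 0 0 = l := by
  have h : finSumFinEquiv.symm (0 : Fin (1 + 3)) = Sum.inl 0 := by decide
  simp [diag13, h]

lemma diag13_apply_one_one (l : ℂ) (n : M3) : diag13 l n 1 1 = n 0 0 := by
  have h : finSumFinEquiv.symm (1 : Fin (1 + 3)) = Sum.inr 0 := by decide
  simp [diag13, h]

lemma diag22_apply_zero_zero (a b : M2) : diag22 a b 0 0 = a 0 0 := by
  have h : finSumFinEquiv.symm (0 : Fin (2 + 2)) = Sum.inl 0 := by decide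
  simp [diag22, bm, h]

lemma commute_gamStar_piPS (q₁ q₂ : M2) {m : M4} (hm : Commute (diag13 (-1) 1) m) :
    Commute gamStar (piPS q₁ q₂ m) := by
  have h01 : (eu 0 0 : M2) * eu 1 1 = 0 := eu_mul_eu_of_ne _ _ (by decide)
  have h10 : (eu 1 1 : M2) * eu 0 0 = 0 := eu_mul_eu_of_ne _ _ (by decide)
  refine .add_left (.add_right ?_ ?_) (.add_right ?_ ?_)
  · exact commute_tp (commute_diag22 (.one_left q₁) (.neg_one_left q₂)) (.refl _) (.one_right _)
  · exact commute_tp_of_mul_eq_zero h01 h10 _ _ _ _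
  · exact commute_tp_of_mul_eq_zero h10 h01 _ _ _ _
  · exact commute_tp hm (.refl _) (.one_right _)

lemma gamStar_mul_tp_eu11 (m : M4) :
    gamStar * tp m (eu 1 1) 1 = tp (diag13 (-1) 1 * m) (eu 1 1) (diag22 1 (-1)) := by
  have h01 : (eu 0 0 : M2) * eu 1 1 = 0 := eu_mul_eu_of_ne _ _ (by decide)
  simp only [gamStar, add_mul, tp_mul, h01, eu_mul_eu, tp_zero_middle, zero_add, mul_one]

lemma tp_eu11_mul_gamStar (m : M4) :
    tp m (eu 1 1) 1 * gamStar = tp (m * diag13 (-1) 1) (eu 1 1) (diag22 1 (-1)) := by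
  have h10 : (eu 1 1 : M2) * eu 0 0 = 0 := eu_mul_eu_of_ne _ _ (by decide)
  simp only [gamStar, mul_add, tp_mul, h10, eu_mul_eu, tp_zero_middle, zero_add, one_mul]

/-- `γ⋆` fails to commute with the represented unreduced Pati–Salam algebra
(there is `m ∈ M₄(ℂ)` with `[γ⋆, m ⊗ e₂₂ ⊗ 1₄] ≠ 0`), but it commutes with the
whole represented reduced algebra `ℍ_R ⊕ ℍ_L ⊕ ℂ ⊕ M₃(ℂ)`. -/
theorem gamStar_commutation :
    (∃ m : M4, gamStar * tp m (eu 1 1) 1 ≠ tp m (eu 1 1) 1 * gamStar) ∧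
    (∀ (q₁ q₂ : M2) (l : ℂ) (n : M3), IsQuat q₁ → IsQuat q₂ →
      gamStar * piRed q₁ q₂ l n = piRed q₁ q₂ l n * gamStar) := by
  refine ⟨⟨eu 0 1, fun h => ?_⟩, fun q₁ q₂ l n _ _ => ?_⟩
  · rw [gamStar_mul_tp_eu11, tp_eu11_mul_gamStar] at h
    have h' := congrFun (congrFun h (0, 1, 0)) (1, 1, 0)
    norm_num [tp, eu, Matrix.mul_single_apply_same, Matrix.single_mul_apply_same,
      diag13_apply_zero_zero, diag13_apply_one_one, diag22_apply_zero_zero] at h'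
  · exact (commute_gamStar_piPS q₁ q₂ (commute_diag13 (-1) l (.one_left n))).eq
end
end
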